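/- Applying the WP-Bailey chain α'_n(a,k) = [(a²/k;q)_{2n}/(kq;q)_{2n}](k²q/a²)^n α_n(a,a²/(kq)), β'_n as in Corollary 2.6, twice in succession returns the original WP-Bailey pair. -/

import Mathlib

/-!
The α-part is a cancellation of prefactors. For the β-part write `K = k²q/a²`, `c = a²/(kq)`
and `w_k(n) = (1 - k q^{2n})/(1 - k)`. Then `w_k · chainBeta q a k β` is the coefficient
sequence of `F_K(X) · B(K X)`, where `B` has coefficients `w_c · β` and
`F_x = ∑ (x;q)_n/(q;q)_n Xⁿ` is the q-binomial series. Passing from `(a, c)` to `(a, k)` swaps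
`w_c ↔ w_k` and `K ↔ K⁻¹`, so the double chain multiplies by `F_K(X) · F_{K⁻¹}(K X)`, which is
`1` by the q-binomial theorem (`(xz;q)_∞/(z;q)_∞ · (z;q)_∞/(xz;q)_∞`). Coefficientwise this
product satisfies `(1 - q^{m+1}) s_{m+1} = (1 - q^m) s_m`, which forces `s_m = 0` for `m ≥ 1`.
-/

open Finset

/-- The q-Pochhammer symbol `(x;q)_m = ∏_{i=0}^{m-1} (1 - x q^i)`. -/
noncomputable def qPoch (q x : ℂ) (m : ℕ) : ℂ := ∏ i ∈ Finset.range m, (1 - x * q ^ i)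

/-- `(α, β)` is a WP-Bailey pair with parameters `a, k` and base `q`. -/
def IsWPBaileyPair (q a k : ℂ) (α β : ℕ → ℂ) : Prop :=
  ∀ n, β n = ∑ j ∈ Finset.range (n + 1),
    qPoch q (k / a) (n - j) * qPoch q k (n + j) /
      (qPoch q q (n - j) * qPoch q (a * q) (n + j)) * α j

/-- The α-component of the WP-Bailey chain of Corollary 2.6 (output parameters `(a,k)`,
input parameters `(a, a²/(kq))`). -/
noncomputable def chainAlpha (q a k : ℂ) (α : ℕ → ℂ) : ℕ → ℂ :=
  fun n => qPoch q (a ^ 2 / k) (2 * n) / qPoch q (k * q) (2 * n) *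
    (k ^ 2 * q / a ^ 2) ^ n * α n

/-- The β-component of the WP-Bailey chain of Corollary 2.6. -/
noncomputable def chainBeta (q a k : ℂ) (β : ℕ → ℂ) : ℕ → ℂ :=
  fun n => (1 - k) / (1 - k * q ^ (2 * n)) *
    ∑ j ∈ Finset.range (n + 1),
      (1 - a ^ 2 * q ^ (2 * j) / (k * q)) / (1 - a ^ 2 / (k * q)) *
        (qPoch q (k ^ 2 * q / a ^ 2) (n - j) / qPoch q q (n - j)) *
        (k ^ 2 * q / a ^ 2) ^ j * β j

open PowerSeries

theorem qPoch_succ (q x : ℂ) (m : ℕ) : qPoch q x (m + 1) = qPoch q x m * (1 - x * q ^ m) :=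
  prod_range_succ _ _

theorem one_sub_pow_succ_ne_zero_of_qPoch_ne_zero {q : ℂ} (hq : ∀ m, qPoch q q m ≠ 0) (m : ℕ) :
    1 - q ^ (m + 1) ≠ 0 := by
  have h := hq (m + 1)
  rw [qPoch_succ, ← pow_succ'] at h
  exact right_ne_zero_of_mul h

section Orthogonality

variable {R : Type*} [CommRing R] {q x : R} {u v : ℕ → R}

theorem one_sub_pow_mul_sum_antidiagonal_succ
    (hu : ∀ t, (1 - q ^ (t + 1)) * u (t + 1) = (x - q ^ t) * u t)
    (hv : ∀ s, (1 - q ^ (s + 1)) * v (s + 1) = (1 - x * q ^ s) * v s) (m : ℕ) :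
    (1 - q ^ (m + 1)) * ∑ p ∈ antidiagonal (m + 1), u p.1 * v p.2 =
      (1 - q ^ m) * ∑ p ∈ antidiagonal m, u p.1 * v p.2 := by
  -- `1 - q^{i+j} = (1 - q^j) + q^j (1 - q^i)`: shift the first part in `j`, the second in `i`
  have split : ∀ p ∈ antidiagonal (m + 1), (1 - q ^ (m + 1)) * (u p.1 * v p.2) =
      u p.1 * ((1 - q ^ p.2) * v p.2) + q ^ p.2 * ((1 - q ^ p.1) * u p.1) * v p.2 := by
    intro p hp
    rw [← mem_antidiagonal.mp hp, pow_add]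
    ring
  rw [mul_sum, sum_congr rfl split, sum_add_distrib, Nat.sum_antidiagonal_succ',
    Nat.sum_antidiagonal_succ]
  simp only [hu, hv, pow_zero, sub_self, zero_mul, mul_zero, zero_add, mul_sum, ← sum_add_distrib]
  refine sum_congr rfl fun p hp => ?_
  rw [← mem_antidiagonal.mp hp, pow_add]
  ring

theorem sum_antidiagonal_succ_eq_zero [NoZeroDivisors R] (hq : ∀ m, 1 - q ^ (m + 1) ≠ 0)
    (hu : ∀ t, (1 - q ^ (t + 1)) * u (t + 1) = (x - q ^ t) * u t)
    (hv : ∀ s, (1 - q ^ (s + 1)) * v (s + 1) = (1 - x * q ^ s) * v s) (m : ℕ) :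
    ∑ p ∈ antidiagonal (m + 1), u p.1 * v p.2 = 0 := by
  refine (mul_eq_zero.mp ?_).resolve_left (hq m)
  rw [one_sub_pow_mul_sum_antidiagonal_succ hu hv]
  cases m with
  | zero => rw [pow_zero, sub_self, zero_mul]
  | succ m => rw [sum_antidiagonal_succ_eq_zero hq hu hv m, mul_zero]

end Orthogonality

noncomputable def qBinomialSeries (q x : ℂ) : PowerSeries ℂ :=
  mk fun n => qPoch q x n / qPoch q q n

section QBinomialSeries

variable {q : ℂ}

theorem one_sub_pow_succ_mul_qPoch_div_succ (hq : ∀ m, 1 - q ^ (m + 1) ≠ 0) (y : ℂ) (s : ℕ) :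
    (1 - q ^ (s + 1)) * (qPoch q y (s + 1) / qPoch q q (s + 1)) =
      (1 - y * q ^ s) * (qPoch q y s / qPoch q q s) := by
  rw [qPoch_succ, qPoch_succ, ← pow_succ', mul_div_assoc', mul_comm (qPoch q q s),
    mul_div_mul_left _ _ (hq s)]
  ring

theorem rescale_qBinomialSeries_inv_mul_self {x : ℂ} (hx : x ≠ 0)
    (hq : ∀ m, 1 - q ^ (m + 1) ≠ 0) :
    rescale x (qBinomialSeries q x⁻¹) * qBinomialSeries q x = 1 := by
  ext (_ | m)
  · simp [coeff_mul, qBinomialSeries, qPoch]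
  · rw [coeff_mul, coeff_one, if_neg m.succ_ne_zero]
    simp only [qBinomialSeries, coeff_rescale, coeff_mk]
    refine sum_antidiagonal_succ_eq_zero (u := fun t => x ^ t * (qPoch q x⁻¹ t / qPoch q q t))
      (v := fun s => qPoch q x s / qPoch q q s) hq (fun t => ?_)
      (one_sub_pow_succ_mul_qPoch_div_succ hq x) m
    rw [mul_left_comm, one_sub_pow_succ_mul_qPoch_div_succ hq, pow_succ x]
    field_simp

theorem qBinomialSeries_mul_rescale_mul_rescale_inv {x : ℂ} (hx : x ≠ 0)
    (hq : ∀ m, 1 - q ^ (m + 1) ≠ 0) (φ : PowerSeries ℂ) :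
    qBinomialSeries q x * rescale x (qBinomialSeries q x⁻¹ * rescale x⁻¹ φ) = φ := by
  rw [map_mul, rescale_rescale, inv_mul_cancel₀ hx, rescale_one, RingHom.id_apply,
    mul_left_comm, ← mul_assoc, rescale_qBinomialSeries_inv_mul_self hx hq, one_mul]

end QBinomialSeries

noncomputable def chainWeight (q k : ℂ) (n : ℕ) : ℂ := (1 - k * q ^ (2 * n)) / (1 - k)

theorem chainBeta_eq_coeff (q a k : ℂ) (β : ℕ → ℂ) (n : ℕ) :
    chainBeta q a k β n = (chainWeight q k n)⁻¹ *
      coeff n (qBinomialSeries q (k ^ 2 * q / a ^ 2) *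
        rescale (k ^ 2 * q / a ^ 2) (mk fun j => chainWeight q (a ^ 2 / (k * q)) j * β j)) := by
  rw [chainBeta, chainWeight, inv_div, mul_comm (qBinomialSeries _ _), coeff_mul,
    Nat.sum_antidiagonal_eq_sum_range_succ (fun i j => coeff i (rescale _ _) * coeff j _)]
  simp only [qBinomialSeries, coeff_rescale, coeff_mk, chainWeight, mul_div_right_comm (a ^ 2)]
  congr 1
  refine sum_congr rfl fun j _ => ?_
  ring

theorem chainAlpha_chainAlpha {q a k : ℂ} (ha0 : a ≠ 0) (hk0 : k ≠ 0) (hq0 : q ≠ 0)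
    (hkq : ∀ m, qPoch q (k * q) m ≠ 0) (hak : ∀ m, qPoch q (a ^ 2 / k) m ≠ 0) (α : ℕ → ℂ) :
    chainAlpha q a k (chainAlpha q a (a ^ 2 / (k * q)) α) = α := by
  have hkq' : a ^ 2 / (a ^ 2 / (k * q)) = k * q := by field_simp
  have hak' : a ^ 2 / (k * q) * q = a ^ 2 / k := by field_simp
  have hK : (a ^ 2 / (k * q)) ^ 2 * q / a ^ 2 = (k ^ 2 * q / a ^ 2)⁻¹ := by field_simp
  funext n
  have := hkq (2 * n)
  have := hak (2 * n)
  simp only [chainAlpha, hkq', hak', hK, inv_pow]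
  field_simp

theorem chainBeta_chainBeta {q a k : ℂ} (ha0 : a ≠ 0) (hk0 : k ≠ 0) (hq0 : q ≠ 0)
    (hq : ∀ m, 1 - q ^ (m + 1) ≠ 0) (hk : ∀ m : ℕ, 1 - k * q ^ m ≠ 0)
    (hc : ∀ m : ℕ, 1 - (a ^ 2 / (k * q)) * q ^ m ≠ 0) (β : ℕ → ℂ) :
    chainBeta q a k (chainBeta q a (a ^ 2 / (k * q)) β) = β := by
  have hck : a ^ 2 / (a ^ 2 / (k * q) * q) = k := by field_simp
  have hK : (a ^ 2 / (k * q)) ^ 2 * q / a ^ 2 = (k ^ 2 * q / a ^ 2)⁻¹ := by field_simp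
  set c := a ^ 2 / (k * q)
  have hK0 : k ^ 2 * q / a ^ 2 ≠ 0 := by positivity
  have hwk (n : ℕ) : chainWeight q k n ≠ 0 := div_ne_zero (hk _) (by simpa using hk 0)
  have hwc (n : ℕ) : chainWeight q c n ≠ 0 := div_ne_zero (hc _) (by simpa using hc 0)
  have inner : mk (fun j => chainWeight q c j * chainBeta q a c β j) =
      qBinomialSeries q (k ^ 2 * q / a ^ 2)⁻¹ *
        rescale (k ^ 2 * q / a ^ 2)⁻¹ (mk fun j => chainWeight q k j * β j) := by
    ext j
    rw [coeff_mk, chainBeta_eq_coeff, hck, hK, mul_inv_cancel_left₀ (hwc j)]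
  funext n
  rw [chainBeta_eq_coeff, inner, qBinomialSeries_mul_rescale_mul_rescale_inv hK0 hq, coeff_mk,
    inv_mul_cancel_left₀ (hwk n)]

theorem chain_cor26_involution_general (q a k : ℂ) (α β : ℕ → ℂ)
    (ha0 : a ≠ 0) (hk0 : k ≠ 0) (hq0 : q ≠ 0)
    (hq : ∀ m, qPoch q q m ≠ 0)
    (hkq : ∀ m, qPoch q (k * q) m ≠ 0)
    (hak : ∀ m, qPoch q (a ^ 2 / k) m ≠ 0)
    (hk : ∀ m : ℕ, 1 - k * q ^ m ≠ 0)
    (hc : ∀ m : ℕ, 1 - (a ^ 2 / (k * q)) * q ^ m ≠ 0) :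
    chainAlpha q a k (chainAlpha q a (a ^ 2 / (k * q)) α) = α ∧
    chainBeta q a k (chainBeta q a (a ^ 2 / (k * q)) β) = β :=
  ⟨chainAlpha_chainAlpha ha0 hk0 hq0 hkq hak α,
    chainBeta_chainBeta ha0 hk0 hq0 (one_sub_pow_succ_ne_zero_of_qPoch_ne_zero hq) hk hc β⟩

/-- A double application of the chain of Corollary 2.6 returns the original WP-Bailey pair. -/
theorem chain_cor26_involution (q a k : ℂ) (α β : ℕ → ℂ)
    (ha0 : a ≠ 0) (hk0 : k ≠ 0) (hq0 : q ≠ 0)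
    (hq : ∀ m, qPoch q q m ≠ 0)
    (hkq : ∀ m, qPoch q (k * q) m ≠ 0)
    (hak : ∀ m, qPoch q (a ^ 2 / k) m ≠ 0)
    (hk : ∀ m : ℕ, 1 - k * q ^ m ≠ 0)
    (hc : ∀ m : ℕ, 1 - (a ^ 2 / (k * q)) * q ^ m ≠ 0)
    (h : IsWPBaileyPair q a k α β) :
    chainAlpha q a k (chainAlpha q a (a ^ 2 / (k * q)) α) = α ∧
    chainBeta q a k (chainBeta q a (a ^ 2 / (k * q)) β) = β :=
  chain_cor26_involution_general q a k α β ha0 hk0 hq0 hq hkq hak hk hc
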